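/- In SCR there is no closed term g of type (σ)term → τ such that g ⌜g⌝ is well typed, for any types σ, τ. -/
import Mathlib

/-- Types of Stratified Combinatory ReFLect: unit, (σ)term, arrows. -/
inductive STy : Type
  | unit
  | term : STy → STy
  | arrow : STy → STy → STy
deriving DecidableEq

inductive SExp : Type
  | I : STy → SExp
  | K : STy → STy → SExp
  | S : STy → STy → STy → SExp
  | value : STy → SExp
  | lift : STy → SExp
  | app : STy → STy → SExp
  | ap : SExp → SExp → SExp
  | quot : SExp → SExp
deriving DecidableEq

/-- Typing rules of SCR. -/
inductive SHasType : SExp → STy → Prop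
  | I (σ) : SHasType (.I σ) (.arrow σ σ)
  | K (σ τ) : SHasType (.K σ τ) (.arrow σ (.arrow τ σ))
  | S (σ τ υ) : SHasType (.S σ τ υ)
      (.arrow (.arrow σ (.arrow τ υ)) (.arrow (.arrow σ τ) (.arrow σ υ)))
  | value (σ) : SHasType (.value σ) (.arrow (.term σ) σ)
  | lift (σ) : SHasType (.lift σ) (.arrow (.term σ) (.term (.term σ)))
  | app (σ τ) : SHasType (.app σ τ)
      (.arrow (.term (.arrow σ τ)) (.arrow (.term σ) (.term τ)))
  | ap {e₁ e₂ σ τ} : SHasType e₁ (.arrow σ τ) → SHasType e₂ σ → SHasType (.ap e₁ e₂) τ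
  | quot {e σ} : SHasType e σ → SHasType (.quot e) (.term σ)

theorem shas_unique : ∀ {e : SExp} {σ τ : STy}, SHasType e σ → SHasType e τ → σ = τ := by
  intro e σ τ h1 h2
  induction h1 generalizing τ <;> cases h2 <;> try rfl
  case ap =>
    rename_i ih1 ih2 x hb ha
    have := ih1 ha
    injection this with h h'
  case quot ih _ h => rw [ih h]

theorem sty_size_ne (σ τ : STy) : σ ≠ STy.arrow (STy.term σ) τ := by
  intro h
  have : sizeOf σ = sizeOf (STy.arrow (STy.term σ) τ) := by rw [← h]
  simp at this
  omega

/-- in SCR no term g of type (σ)term → τ admits a well-typed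
self-application g ⌜g⌝. -/
theorem scr_no_self_application (σ τ : STy) (g : SExp)
    (hg : SHasType g (.arrow (.term σ) τ)) :
    ¬ ∃ υ : STy, SHasType (.ap g (.quot g)) υ := by
  rintro ⟨υ, h⟩
  cases h with
  | ap h1 h2 =>
    rename_i σ'
    cases h2 with
    | quot h3 =>
      have e1 := shas_unique hg h1
      injection e1 with e2 e3
      injection e2 with e4
      have e5 := shas_unique h3 hg
      rw [← e4] at e5
      exact sty_size_ne σ τ e5
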